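/- arXiv:2508.01363 — 2 statements merged into one kernel-verified Lean document; each statement's English description precedes it below -/
import Mathlib

section
/- Let (X,T) be an NDS, Z ⊂ X_0, and let f be an equicontinuous potential. Then the Bowen pressure satisfies P^B(T,f,Z) = lim_{diam(𝒰)→0} P^{BPP}(T,f,Z,𝒰), where 𝒰 ranges over all sequences of open covers of the X_k possessing a Lebesgue number and P^{BPP}(T,f,Z,𝒰) is the open-cover Bowen pressure defined below. -/
open Filter Set
open scoped ENNReal NNReal

noncomputable section

namespace NDS

variable {X : ℕ → Type*}

/-- The orbit maps `T_k^j : X k → X (k+j)` of a nonautonomous system. -/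
def iterFrom (T : ∀ k, X k → X (k + 1)) (k : ℕ) : ∀ j, X k → X (k + j)
  | 0 => fun x => x
  | j + 1 => fun x => T (k + j) (iterFrom T k j x)

/-- The orbit maps `T^j = T_{j-1} ∘ ⋯ ∘ T_0 : X 0 → X j`. -/
def iter (T : ∀ k, X k → X (k + 1)) : ∀ j, X 0 → X j
  | 0 => fun x => x
  | j + 1 => fun x => T j (iter T j x)

variable [∀ k, MetricSpace (X k)]

/-- The `n`-th Bowen metric on `X 0`:  `d_n^T(x,y) = max_{0 ≤ j ≤ n-1} d_j (T^j x) (T^j y)`. -/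
def bowenDist (T : ∀ k, X k → X (k + 1)) (n : ℕ) (x y : X 0) : ℝ :=
  (((Finset.range n).sup fun j => nndist (iter T j x) (iter T j y) : ℝ≥0) : ℝ)

/-- The open Bowen ball `B_n^T(x, ε)`. -/
def bowenBall (T : ∀ k, X k → X (k + 1)) (n : ℕ) (x : X 0) (ε : ℝ) : Set (X 0) :=
  {y | bowenDist T n x y < ε}

/-- The closed Bowen ball `clB_n^T(x, ε)`. -/
def bowenClosedBall (T : ∀ k, X k → X (k + 1)) (n : ℕ) (x : X 0) (ε : ℝ) : Set (X 0) :=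
  {y | bowenDist T n x y ≤ ε}

/-- Birkhoff sums starting at level `k`:  `S_{k,n}^T f = Σ_{j<n} f_{k+j} ∘ T_k^j`. -/
def birkFrom (T : ∀ k, X k → X (k + 1)) (f : ∀ k, X k → ℝ) (k n : ℕ) (x : X k) : ℝ :=
  ∑ j ∈ Finset.range n, f (k + j) (iterFrom T k j x)

/-- Birkhoff sums `S_n^T f = Σ_{j<n} f_j ∘ T^j` on `X 0`. -/
def birk (T : ∀ k, X k → X (k + 1)) (f : ∀ k, X k → ℝ) (n : ℕ) (x : X 0) : ℝ :=
  ∑ j ∈ Finset.range n, f j (iter T j x)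

/-- A potential `f = {f_k}` is equicontinuous. -/
def EquicontPotential (f : ∀ k, X k → ℝ) : Prop :=
  ∀ ε : ℝ, 0 < ε → ∃ δ : ℝ, 0 < δ ∧
    ∀ k, ∀ x y : X k, dist x y < δ → |f k x - f k y| < ε

/-- The sequence of maps `T = {T_k}` is equicontinuous. -/
def EquicontMaps (T : ∀ k, X k → X (k + 1)) : Prop :=
  ∀ ε : ℝ, 0 < ε → ∃ δ : ℝ, 0 < δ ∧
    ∀ k, ∀ x y : X k, dist x y < δ → dist (T k x) (T k y) < ε

/-- `F` is an `(n,ε)`-spanning set for `Z`. -/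
def IsSpanning (T : ∀ k, X k → X (k + 1)) (n : ℕ) (ε : ℝ) (Z : Set (X 0))
    (F : Finset (X 0)) : Prop :=
  ∀ x ∈ Z, ∃ y ∈ F, bowenDist T n x y ≤ ε

/-- `E` is an `(n,ε)`-separated set for `Z`. -/
def IsSeparated (T : ∀ k, X k → X (k + 1)) (n : ℕ) (ε : ℝ) (Z : Set (X 0))
    (E : Finset (X 0)) : Prop :=
  ↑E ⊆ Z ∧ ∀ x ∈ E, ∀ y ∈ E, x ≠ y → ε < bowenDist T n x y

/-- The partition sum `Σ_{x ∈ F} e^{S_n^T f(x)}` (valued in `ℝ≥0∞`). -/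
def partSum (T : ∀ k, X k → X (k + 1)) (f : ∀ k, X k → ℝ) (n : ℕ) (F : Finset (X 0)) : ℝ≥0∞ :=
  ∑ x ∈ F, ENNReal.ofReal (Real.exp (birk T f n x))

/-- `Q_n(T,f,Z,ε)`, infimum over `(n,ε)`-spanning sets. -/
def Qn (T : ∀ k, X k → X (k + 1)) (f : ∀ k, X k → ℝ) (Z : Set (X 0)) (n : ℕ) (ε : ℝ) : ℝ≥0∞ :=
  ⨅ (F : Finset (X 0)) (_ : IsSpanning T n ε Z F), partSum T f n F

/-- `P_n(T,f,Z,ε)`, supremum over `(n,ε)`-separated sets. -/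
def Pn (T : ∀ k, X k → X (k + 1)) (f : ∀ k, X k → ℝ) (Z : Set (X 0)) (n : ℕ) (ε : ℝ) : ℝ≥0∞ :=
  ⨆ (E : Finset (X 0)) (_ : IsSeparated T n ε Z E), partSum T f n E

/-- `liminf_n (1/n) log u n` (in `EReal`). -/
def lowRate (u : ℕ → ℝ≥0∞) : EReal :=
  Filter.atTop.liminf fun n : ℕ => (((n : ℝ)⁻¹ : ℝ) : EReal) * ENNReal.log (u n)

/-- `limsup_n (1/n) log u n` (in `EReal`). -/
def upRate (u : ℕ → ℝ≥0∞) : EReal :=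
  Filter.atTop.limsup fun n : ℕ => (((n : ℝ)⁻¹ : ℝ) : EReal) * ENNReal.log (u n)

/-- Lower spanning topological pressure `Q_low(T,f,Z)`; the limit as `ε → 0` is realised as a
supremum over `ε > 0`, the quantity being monotone in `ε`. -/
def Qlow (T : ∀ k, X k → X (k + 1)) (f : ∀ k, X k → ℝ) (Z : Set (X 0)) : EReal :=
  ⨆ (ε : ℝ) (_ : 0 < ε), lowRate fun n => Qn T f Z n ε

/-- Upper spanning topological pressure `Q_up(T,f,Z)`. -/
def Qup (T : ∀ k, X k → X (k + 1)) (f : ∀ k, X k → ℝ) (Z : Set (X 0)) : EReal :=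
  ⨆ (ε : ℝ) (_ : 0 < ε), upRate fun n => Qn T f Z n ε

/-- Lower separated topological pressure `P_low(T,f,Z)`. -/
def Plow (T : ∀ k, X k → X (k + 1)) (f : ∀ k, X k → ℝ) (Z : Set (X 0)) : EReal :=
  ⨆ (ε : ℝ) (_ : 0 < ε), lowRate fun n => Pn T f Z n ε

/-- Upper separated topological pressure `P_up(T,f,Z)`. -/
def Pup (T : ∀ k, X k → X (k + 1)) (f : ∀ k, X k → ℝ) (Z : Set (X 0)) : EReal :=
  ⨆ (ε : ℝ) (_ : 0 < ε), upRate fun n => Pn T f Z n ε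

/-- The critical value `inf {s : M s = 0}` of a "measure profile" `M`, as an extended real. -/
def crit (M : ℝ → ℝ≥0∞) : EReal :=
  sInf (Real.toEReal '' {s : ℝ | M s = 0})

/-- The critical value `sup {s : M s = ∞}` of a "measure profile" `M`, as an extended real. -/
def critSup (M : ℝ → ℝ≥0∞) : EReal :=
  sSup (Real.toEReal '' {s : ℝ | M s = ⊤})

/-- A countable family of Bowen balls (recorded by their (center, order) data) which is an
`(N,ε)`-cover of `Z`. -/
def IsBowenCover (T : ∀ k, X k → X (k + 1)) (N : ℕ) (ε : ℝ) (Z : Set (X 0))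
    (C : Set (X 0 × ℕ)) : Prop :=
  C.Countable ∧ (∀ p ∈ C, N ≤ p.2) ∧ Z ⊆ ⋃ p ∈ C, bowenBall T p.2 p.1 ε

/-- A countable disjoint family of closed Bowen balls with centers in `Z` and orders `≥ N`:
an `(N,ε)`-packing of `Z`. -/
def IsBowenPacking (T : ∀ k, X k → X (k + 1)) (N : ℕ) (ε : ℝ) (Z : Set (X 0))
    (P : Set (X 0 × ℕ)) : Prop :=
  P.Countable ∧ (∀ p ∈ P, p.1 ∈ Z ∧ N ≤ p.2) ∧
    ∀ p ∈ P, ∀ q ∈ P, p ≠ q →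
      Disjoint (bowenClosedBall T p.2 p.1 ε) (bowenClosedBall T q.2 q.1 ε)

/-- `Σ_i exp (-n_i s + S_{n_i}^T f (x_i))` over a family of (center, order) pairs. -/
def ballSum (T : ∀ k, X k → X (k + 1)) (f : ∀ k, X k → ℝ) (s : ℝ) (C : Set (X 0 × ℕ)) : ℝ≥0∞ :=
  ∑' p : C, ENNReal.ofReal (Real.exp (-(p.1.2 : ℝ) * s + birk T f p.1.2 p.1.1))

/-- The Hausdorff-type pre-measure `M^s_{N,ε}(T,f,Z)`. -/
def bowenPreMeas (T : ∀ k, X k → X (k + 1)) (f : ∀ k, X k → ℝ) (Z : Set (X 0))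
    (s : ℝ) (N : ℕ) (ε : ℝ) : ℝ≥0∞ :=
  ⨅ (C : Set (X 0 × ℕ)) (_ : IsBowenCover T N ε Z C), ballSum T f s C

/-- `M^s_ε(T,f,Z) = lim_{N → ∞} M^s_{N,ε}(T,f,Z)` (an increasing limit, i.e. a supremum). -/
def bowenMeas (T : ∀ k, X k → X (k + 1)) (f : ∀ k, X k → ℝ) (Z : Set (X 0))
    (s : ℝ) (ε : ℝ) : ℝ≥0∞ :=
  ⨆ N : ℕ, bowenPreMeas T f Z s N ε

/-- `P^B(T,f,Z,ε)`: the critical value of `s ↦ M^s_ε(T,f,Z)`. -/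
def PBe (T : ∀ k, X k → X (k + 1)) (f : ∀ k, X k → ℝ) (Z : Set (X 0)) (ε : ℝ) : EReal :=
  crit fun s => bowenMeas T f Z s ε

/-- The Bowen (Pesin–Pitskel') topological pressure `P^B(T,f,Z)`; the limit as `ε → 0` is
realised as a supremum over `ε > 0` by monotonicity. -/
def PB (T : ∀ k, X k → X (k + 1)) (f : ∀ k, X k → ℝ) (Z : Set (X 0)) : EReal :=
  ⨆ (ε : ℝ) (_ : 0 < ε), PBe T f Z ε

/-- The packing pre-measure `𝒫^s_{N,ε}(T,f,Z)`. -/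
def packPre (T : ∀ k, X k → X (k + 1)) (f : ∀ k, X k → ℝ) (Z : Set (X 0))
    (s : ℝ) (N : ℕ) (ε : ℝ) : ℝ≥0∞ :=
  ⨆ (P : Set (X 0 × ℕ)) (_ : IsBowenPacking T N ε Z P), ballSum T f s P

/-- The packing content `𝒫^s_{∞,ε}(T,f,Z) = lim_{N→∞} 𝒫^s_{N,ε}` (a decreasing limit, i.e. an
infimum). -/
def packContent (T : ∀ k, X k → X (k + 1)) (f : ∀ k, X k → ℝ) (Z : Set (X 0))
    (s : ℝ) (ε : ℝ) : ℝ≥0∞ :=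
  ⨅ N : ℕ, packPre T f Z s N ε

/-- The packing measure `𝒫^s_ε(T,f,Z)`, obtained from the content by countable decompositions. -/
def packMeas (T : ∀ k, X k → X (k + 1)) (f : ∀ k, X k → ℝ) (Z : Set (X 0))
    (s : ℝ) (ε : ℝ) : ℝ≥0∞ :=
  ⨅ (D : ℕ → Set (X 0)) (_ : Z ⊆ ⋃ i, D i), ∑' i, packContent T f (D i) s ε

/-- `P^P(T,f,Z,ε)`: the critical value of `s ↦ 𝒫^s_ε(T,f,Z)`. -/
def PPe (T : ∀ k, X k → X (k + 1)) (f : ∀ k, X k → ℝ) (Z : Set (X 0)) (ε : ℝ) : EReal :=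
  crit fun s => packMeas T f Z s ε

/-- The packing topological pressure `P^P(T,f,Z)`. -/
def PP (T : ∀ k, X k → X (k + 1)) (f : ∀ k, X k → ℝ) (Z : Set (X 0)) : EReal :=
  ⨆ (ε : ℝ) (_ : 0 < ε), PPe T f Z ε

end NDS

namespace NDS

open scoped Classical

variable {X : ℕ → Type*} [∀ k, MetricSpace (X k)]

/-- A sequence `𝒰 = {𝒰_k}` of open covers of the spaces `X k`. -/
structure CoverSeq (X : ℕ → Type*) [∀ k, MetricSpace (X k)] where
  mem : ∀ k, Set (Set (X k))
  isOpen' : ∀ k, ∀ u ∈ mem k, IsOpen u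
  covers' : ∀ k, ∀ x : X k, ∃ u ∈ mem k, x ∈ u

/-- `𝒰` has a (uniform) Lebesgue number. -/
def HasLebesgueNumber (𝒰 : CoverSeq X) : Prop :=
  ∃ δ : ℝ, 0 < δ ∧ ∀ k, ∀ x : X k, ∃ u ∈ 𝒰.mem k, Metric.ball x δ ⊆ u

/-- `diam 𝒰 = sup_k sup_{u ∈ 𝒰_k} diam u` (in `ℝ≥0∞`). -/
def coverDiam (𝒰 : CoverSeq X) : ℝ≥0∞ :=
  ⨆ (k : ℕ), ⨆ u ∈ 𝒰.mem k, EMetric.diam u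

/-- The cylinder `X_0[U] = ⋂_{j<n} (T^j)⁻¹ (U_j)` associated with a string `v` of length `n`. -/
def cylinder (T : ∀ k, X k → X (k + 1)) (n : ℕ) (v : ∀ j, Set (X j)) : Set (X 0) :=
  ⋂ (j : ℕ) (_ : j < n), iter T j ⁻¹' v j

/-- `exp(S̲_n^T f (U))`, where `S̲_n^T f (U) = inf_{x ∈ X_0[U]} S_n^T f x` (`= -∞`, i.e. the
weight is `0`, when the cylinder is empty). -/
def cylWeightInf (T : ∀ k, X k → X (k + 1)) (f : ∀ k, X k → ℝ) (n : ℕ)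
    (v : ∀ j, Set (X j)) : ℝ≥0∞ :=
  if (cylinder T n v).Nonempty then
    ⨅ x ∈ cylinder T n v, ENNReal.ofReal (Real.exp (birk T f n x))
  else 0

/-- `Q_n(T,f,Z,𝒰)`: infimum over families `Γ ⊆ 𝒰_0^n` of strings of length `n` covering `Z`. -/
def QnCov (T : ∀ k, X k → X (k + 1)) (f : ∀ k, X k → ℝ) (Z : Set (X 0)) (n : ℕ)
    (𝒰 : CoverSeq X) : ℝ≥0∞ :=
  ⨅ (Γ : Set (∀ j, Set (X j)))
    (_ : (∀ v ∈ Γ, ∀ j < n, v j ∈ 𝒰.mem j) ∧ Z ⊆ ⋃ v ∈ Γ, cylinder T n v),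
    ∑' v : Γ, cylWeightInf T f n v.1

end NDS

namespace NDS

variable {X : ℕ → Type*} [∀ k, MetricSpace (X k)]

/-- `exp(-n s + S̄_n^T f (U))`, where `S̄_n^T f (U) = sup_{x ∈ X_0[U]} S_n^T f x` (the weight is
`0` when the cylinder is empty, corresponding to `S̄ = -∞`). -/
def cylWeightSup (T : ∀ k, X k → X (k + 1)) (f : ∀ k, X k → ℝ) (s : ℝ) (n : ℕ)
    (v : ∀ j, Set (X j)) : ℝ≥0∞ :=
  ⨆ x ∈ cylinder T n v, ENNReal.ofReal (Real.exp (-(n : ℝ) * s + birk T f n x))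

/-- `𝔐^s_N(T,f,Z,𝒰)`: infimum over countable families of strings of length `≥ N` covering `Z`. -/
def bppPre (T : ∀ k, X k → X (k + 1)) (f : ∀ k, X k → ℝ) (Z : Set (X 0)) (s : ℝ) (N : ℕ)
    (𝒰 : CoverSeq X) : ℝ≥0∞ :=
  ⨅ (Γ : Set ((∀ j, Set (X j)) × ℕ))
    (_ : Γ.Countable ∧ (∀ p ∈ Γ, N ≤ p.2 ∧ ∀ j < p.2, p.1 j ∈ 𝒰.mem j) ∧
      Z ⊆ ⋃ p ∈ Γ, cylinder T p.2 p.1),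
    ∑' p : Γ, cylWeightSup T f s p.1.2 p.1.1

/-- `𝔐^s(T,f,Z,𝒰) = lim_{N→∞} 𝔐^s_N(T,f,Z,𝒰)` (an increasing limit, i.e. a supremum). -/
def bppMeas (T : ∀ k, X k → X (k + 1)) (f : ∀ k, X k → ℝ) (Z : Set (X 0)) (s : ℝ)
    (𝒰 : CoverSeq X) : ℝ≥0∞ :=
  ⨆ N : ℕ, bppPre T f Z s N 𝒰

/-- The open-cover Bowen pressure `P^{BPP}(T,f,Z,𝒰)`. -/
def PBPP (T : ∀ k, X k → X (k + 1)) (f : ∀ k, X k → ℝ) (Z : Set (X 0))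
    (𝒰 : CoverSeq X) : EReal :=
  crit fun s => bppMeas T f Z s 𝒰

end NDS

/-!
If `diam 𝒰 < ε`, the cylinder of a string of length `n` lies in the Bowen ball `B_n(x, ε)` around
any of its points, so a cover by strings yields an `(N, ε)`-cover by Bowen balls with no larger
weights: `P^B(T,f,Z,ε) ≤ P^{BPP}(T,f,Z,𝒰)`. Conversely, if `δ` is a Lebesgue number of `𝒰`,
the ball `B_n(x, δ)` lies in the cylinder of a string chosen along the orbit of `x`; once
`diam 𝒰` is below the equicontinuity modulus of `f` for `γ`, the sum `S_n f` varies by at most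
`n γ` on that cylinder, whence `P^{BPP}(T,f,Z,𝒰) ≤ P^B(T,f,Z,δ) + γ ≤ P^B(T,f,Z) + γ`.
-/

lemma EReal.exists_pos_add_lt {a b : EReal} (h : a < b) : ∃ γ : ℝ, 0 < γ ∧ a + γ < b := by
  obtain ⟨x, hax, hxb⟩ := EReal.lt_iff_exists_real_btwn.1 h
  obtain ⟨y, hay, hyx⟩ := EReal.lt_iff_exists_real_btwn.1 hax
  have hyx' : y < x := by exact_mod_cast hyx
  refine ⟨x - y, by linarith, lt_of_le_of_lt ?_ hxb⟩
  calc a + ((x - y : ℝ) : EReal) ≤ y + ((x - y : ℝ) : EReal) := add_le_add_left hay.le _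
    _ = x := by rw [← EReal.coe_add, add_sub_cancel]

namespace NDS

lemma crit_le_add_of_le {M M' : ℝ → ℝ≥0∞} (γ : ℝ) (h : ∀ s, M' (s + γ) ≤ M s) :
    crit M' ≤ crit M + γ := by
  have hshift {a b : EReal} : a - γ ≤ b ↔ a ≤ b + γ :=
    EReal.sub_le_iff_le_add (.inl (EReal.coe_ne_bot γ)) (.inl (EReal.coe_ne_top γ))
  refine hshift.1 (le_sInf ?_)
  rintro _ ⟨s, hs, rfl⟩
  refine hshift.2 (sInf_le ⟨s + γ, ?_, EReal.coe_add s γ⟩)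
  exact le_zero_iff.1 (hs ▸ h s)

lemma crit_mono {M M' : ℝ → ℝ≥0∞} (h : ∀ s, M s ≤ M' s) : crit M ≤ crit M' := by
  simpa using crit_le_add_of_le (M := M') (M' := M) 0 (by simpa using h)

variable {X : ℕ → Type*} {T : ∀ k, X k → X (k + 1)}

lemma ballSum_range_le {ι : Type*} (f : ∀ k, X k → ℝ) (s : ℝ) (m : ι → X 0 × ℕ) :
    ballSum T f s (range m) ≤
      ∑' i, ENNReal.ofReal (Real.exp (-((m i).2 : ℝ) * s + birk T f (m i).2 (m i).1)) :=
  ENNReal.tsum_le_tsum_comp_of_surjective rangeFactorization_surjective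
    fun q : range m => ENNReal.ofReal (Real.exp (-(q.1.2 : ℝ) * s + birk T f q.1.2 q.1.1))

variable [∀ k, MetricSpace (X k)]

lemma dist_iter_le_bowenDist {j n : ℕ} (hj : j < n) (x y : X 0) :
    dist (iter T j x) (iter T j y) ≤ bowenDist T n x y := by
  unfold bowenDist
  exact_mod_cast Finset.le_sup (f := fun j => nndist (iter T j x) (iter T j y))
    (Finset.mem_range.2 hj)

lemma bowenDist_lt_iff {n : ℕ} {x y : X 0} {ε : ℝ} (hε : 0 < ε) :
    bowenDist T n x y < ε ↔ ∀ j < n, dist (iter T j x) (iter T j y) < ε := by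
  rw [bowenDist, ← Real.lt_toNNReal_iff_coe_lt, Finset.sup_lt_iff (Real.toNNReal_pos.2 hε)]
  simp only [Finset.mem_range, Real.lt_toNNReal_iff_coe_lt, coe_nndist]

lemma mem_bowenBall_self {n : ℕ} (x : X 0) {ε : ℝ} (hε : 0 < ε) : x ∈ bowenBall T n x ε :=
  (bowenDist_lt_iff hε).2 fun j _ => by simpa using hε

lemma birk_le_add_of_mem_bowenBall {f : ∀ k, X k → ℝ} {δ γ : ℝ}
    (hmod : ∀ k, ∀ x y : X k, dist x y < δ → |f k x - f k y| < γ) {n : ℕ} {x y : X 0}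
    (hy : y ∈ bowenBall T n x δ) : birk T f n y ≤ birk T f n x + n * γ := by
  have hterm : ∀ j ∈ Finset.range n, f j (iter T j y) ≤ f j (iter T j x) + γ := by
    intro j hj
    have := hmod j _ _ ((dist_iter_le_bowenDist (Finset.mem_range.1 hj) x y).trans_lt hy)
    linarith [(abs_lt.1 this).1]
  calc birk T f n y ≤ ∑ j ∈ Finset.range n, (f j (iter T j x) + γ) := Finset.sum_le_sum hterm
    _ = birk T f n x + n * γ := by simp [birk, Finset.sum_add_distrib]

lemma dist_lt_of_mem_cover {𝒰 : CoverSeq X} {η : ℝ} (hd : coverDiam 𝒰 < ENNReal.ofReal η)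
    {k : ℕ} {u : Set (X k)} (hu : u ∈ 𝒰.mem k) {x y : X k} (hx : x ∈ u) (hy : y ∈ u) :
    dist x y < η := by
  have hdiam : Metric.ediam u ≤ coverDiam 𝒰 :=
    le_iSup_of_le k (le_iSup₂ (f := fun u _ => Metric.ediam u) u hu)
  exact edist_lt_ofReal.1 ((Metric.edist_le_ediam_of_mem hx hy).trans_lt (hdiam.trans_lt hd))

lemma cylinder_subset_bowenBall {𝒰 : CoverSeq X} {ε : ℝ} (hd : coverDiam 𝒰 < ENNReal.ofReal ε)
    {n : ℕ} {v : ∀ j, Set (X j)} (hv : ∀ j < n, v j ∈ 𝒰.mem j) {x : X 0}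
    (hx : x ∈ cylinder T n v) : cylinder T n v ⊆ bowenBall T n x ε := by
  have hε : 0 < ε := ENNReal.ofReal_pos.1 (zero_le.trans_lt hd)
  intro y hy
  refine (bowenDist_lt_iff hε).2 fun j hj => dist_lt_of_mem_cover hd (hv j hj) ?_ ?_
  · exact mem_iInter₂.1 hx j hj
  · exact mem_iInter₂.1 hy j hj

lemma bowenBall_subset_cylinder {δ : ℝ} {u : ∀ k, X k → Set (X k)}
    (hball : ∀ k (x : X k), Metric.ball x δ ⊆ u k x) (n : ℕ) (x : X 0) :
    bowenBall T n x δ ⊆ cylinder T n fun j => u j (iter T j x) := by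
  intro y hy
  refine mem_iInter₂.2 fun j hj => hball j _ ?_
  rw [Metric.mem_ball, dist_comm]
  exact (dist_iter_le_bowenDist hj x y).trans_lt hy

lemma cylWeightSup_add_le {f : ∀ k, X k → ℝ} {δ γ : ℝ}
    (hmod : ∀ k, ∀ x y : X k, dist x y < δ → |f k x - f k y| < γ) (s : ℝ) {n : ℕ}
    {v : ∀ j, Set (X j)} {x : X 0} (hsub : cylinder T n v ⊆ bowenBall T n x δ) :
    cylWeightSup T f (s + γ) n v ≤ ENNReal.ofReal (Real.exp (-(n : ℝ) * s + birk T f n x)) := by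
  refine iSup₂_le fun y hy => ENNReal.ofReal_le_ofReal (Real.exp_le_exp.2 ?_)
  linarith [birk_le_add_of_mem_bowenBall hmod (hsub hy)]

lemma bowenPreMeas_le_bppPre {𝒰 : CoverSeq X} {ε : ℝ} (hd : coverDiam 𝒰 < ENNReal.ofReal ε)
    (f : ∀ k, X k → ℝ) (Z : Set (X 0)) (s : ℝ) (N : ℕ) :
    bowenPreMeas T f Z s N ε ≤ bppPre T f Z s N 𝒰 := by
  refine le_iInf₂ fun Γ ⟨hΓc, hΓmem, hΓcov⟩ => ?_
  set Γ' := {p ∈ Γ | (cylinder T p.2 p.1).Nonempty}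
  have hΓ' : Γ' ⊆ Γ := sep_subset _ _
  choose x hx using fun p : Γ' => p.2.2
  let m : Γ' → X 0 × ℕ := fun p => (x p, p.1.2)
  have hC : IsBowenCover T N ε Z (range m) := by
    have := (hΓc.mono hΓ').to_subtype
    refine ⟨countable_range m, ?_, fun z hz => ?_⟩
    · rintro _ ⟨p, rfl⟩
      exact (hΓmem p.1 (hΓ' p.2)).1
    obtain ⟨p, hp, hzp⟩ := mem_iUnion₂.1 (hΓcov hz)
    let p' : Γ' := ⟨p, hp, z, hzp⟩
    exact mem_iUnion₂.2 ⟨m p', mem_range_self _,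
      cylinder_subset_bowenBall hd (hΓmem p hp).2 (hx p') hzp⟩
  calc bowenPreMeas T f Z s N ε ≤ ballSum T f s (range m) := iInf₂_le _ hC
    _ ≤ ∑' p : Γ', ENNReal.ofReal (Real.exp (-(p.1.2 : ℝ) * s + birk T f p.1.2 (x p))) :=
      ballSum_range_le f s m
    _ ≤ ∑' p : Γ', cylWeightSup T f s p.1.2 p.1.1 :=
      ENNReal.tsum_le_tsum fun p =>
        le_iSup₂ (f := fun y _ => ENNReal.ofReal (Real.exp (-(p.1.2 : ℝ) * s + birk T f p.1.2 y)))
          (x p) (hx p)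
    _ ≤ ∑' p : Γ, cylWeightSup T f s p.1.2 p.1.1 :=
      ENNReal.tsum_mono_subtype (fun p : (∀ j, Set (X j)) × ℕ => cylWeightSup T f s p.2 p.1) hΓ'

lemma bppPre_add_le_bowenPreMeas {𝒰 : CoverSeq X} {δ δf γ : ℝ} (hδ : 0 < δ)
    {u : ∀ k, X k → Set (X k)} (hu : ∀ k x, u k x ∈ 𝒰.mem k)
    (hball : ∀ k (x : X k), Metric.ball x δ ⊆ u k x) {f : ∀ k, X k → ℝ}
    (hmod : ∀ k, ∀ x y : X k, dist x y < δf → |f k x - f k y| < γ)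
    (hd : coverDiam 𝒰 < ENNReal.ofReal δf) (Z : Set (X 0)) (s : ℝ) (N : ℕ) :
    bppPre T f Z (s + γ) N 𝒰 ≤ bowenPreMeas T f Z s N δ := by
  refine le_iInf₂ fun C ⟨hCc, hCN, hCcov⟩ => ?_
  let orbitString (x : X 0) : ∀ j, Set (X j) := fun j => u j (iter T j x)
  let m : C → (∀ j, Set (X j)) × ℕ := fun p => (orbitString p.1.1, p.1.2)
  have hΓ : (range m).Countable ∧ (∀ q ∈ range m, N ≤ q.2 ∧ ∀ j < q.2, q.1 j ∈ 𝒰.mem j) ∧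
      Z ⊆ ⋃ q ∈ range m, cylinder T q.2 q.1 := by
    have := hCc.to_subtype
    refine ⟨countable_range m, ?_, fun z hz => ?_⟩
    · rintro _ ⟨p, rfl⟩
      exact ⟨hCN p.1 p.2, fun j _ => hu j _⟩
    obtain ⟨p, hp, hzp⟩ := mem_iUnion₂.1 (hCcov hz)
    exact mem_iUnion₂.2 ⟨m ⟨p, hp⟩, mem_range_self _, bowenBall_subset_cylinder hball p.2 p.1 hzp⟩
  have hcyl (p : C) : cylinder T p.1.2 (orbitString p.1.1) ⊆ bowenBall T p.1.2 p.1.1 δf :=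
    cylinder_subset_bowenBall hd (fun j _ => hu j _)
      (bowenBall_subset_cylinder hball _ _ (mem_bowenBall_self _ hδ))
  calc bppPre T f Z (s + γ) N 𝒰 ≤ ∑' q : range m, cylWeightSup T f (s + γ) q.1.2 q.1.1 :=
        iInf₂_le (range m) hΓ
    _ ≤ ∑' p : C, cylWeightSup T f (s + γ) (m p).2 (m p).1 :=
      ENNReal.tsum_le_tsum_comp_of_surjective rangeFactorization_surjective
        fun q : range m => cylWeightSup T f (s + γ) q.1.2 q.1.1
    _ ≤ ballSum T f s C := ENNReal.tsum_le_tsum fun p => cylWeightSup_add_le hmod s (hcyl p)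

lemma PBe_le_PBPP (f : ∀ k, X k → ℝ) (Z : Set (X 0)) {𝒰 : CoverSeq X} {ε : ℝ}
    (hd : coverDiam 𝒰 < ENNReal.ofReal ε) : PBe T f Z ε ≤ PBPP T f Z 𝒰 :=
  crit_mono fun s => iSup_mono fun N => bowenPreMeas_le_bppPre hd f Z s N

lemma PBPP_le_PB_add {𝒰 : CoverSeq X} (h𝒰 : HasLebesgueNumber 𝒰) {f : ∀ k, X k → ℝ}
    {δf γ : ℝ} (hmod : ∀ k, ∀ x y : X k, dist x y < δf → |f k x - f k y| < γ)
    (hd : coverDiam 𝒰 < ENNReal.ofReal δf) (Z : Set (X 0)) :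
    PBPP T f Z 𝒰 ≤ PB T f Z + γ := by
  obtain ⟨δ, hδ, hLeb⟩ := h𝒰
  choose u hu hball using hLeb
  calc PBPP T f Z 𝒰 ≤ PBe T f Z δ + γ :=
        crit_le_add_of_le γ fun s =>
          iSup_mono fun N => bppPre_add_le_bowenPreMeas hδ hu hball hmod hd Z s N
    _ ≤ PB T f Z + γ := by gcongr; exact le_iSup₂_of_le δ hδ le_rfl

end NDS

open NDS

theorem bowen_pressure_via_open_covers_general {X : ℕ → Type*} [∀ k, MetricSpace (X k)]
    (T : ∀ k, X k → X (k + 1))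
    (f : ∀ k, X k → ℝ) (hfe : NDS.EquicontPotential f)
    (Z : Set (X 0)) :
    Filter.Tendsto (fun 𝒰 : {𝒰 : NDS.CoverSeq X // NDS.HasLebesgueNumber 𝒰} =>
        NDS.PBPP T f Z 𝒰.1)
      (Filter.comap (fun 𝒰 : {𝒰 : NDS.CoverSeq X // NDS.HasLebesgueNumber 𝒰} =>
        NDS.coverDiam 𝒰.1) (nhds 0)) (nhds (NDS.PB T f Z)) := by
  have hsmall {η : ℝ} (hη : 0 < η) : ∀ᶠ 𝒰 in Filter.comap
      (fun 𝒰 : {𝒰 : CoverSeq X // HasLebesgueNumber 𝒰} => coverDiam 𝒰.1) (nhds 0),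
      coverDiam 𝒰.1 < ENNReal.ofReal η :=
    preimage_mem_comap (Iio_mem_nhds (ENNReal.ofReal_pos.2 hη))
  refine tendsto_order.2 ⟨fun a ha => ?_, fun b hb => ?_⟩
  · obtain ⟨ε, hε, ha⟩ : ∃ ε, ∃ _ : 0 < ε, a < PBe T f Z ε := by
      simpa only [PB, lt_iSup_iff] using ha
    filter_upwards [hsmall hε] with 𝒰 h𝒰 using ha.trans_le (PBe_le_PBPP f Z h𝒰)
  · obtain ⟨γ, hγ, hb⟩ := EReal.exists_pos_add_lt hb
    obtain ⟨δf, hδf, hmod⟩ := hfe γ hγ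
    filter_upwards [hsmall hδf] with 𝒰 h𝒰 using (PBPP_le_PB_add 𝒰.2 hmod h𝒰 Z).trans_lt hb

/-- For an equicontinuous potential `f`, the Bowen pressure is the limit, as
`diam 𝒰 → 0` over sequences of open covers `𝒰` with a Lebesgue number, of the open-cover Bowen
pressure `P^{BPP}(T,f,Z,𝒰)`. -/
theorem bowen_pressure_via_open_covers {X : ℕ → Type*} [∀ k, MetricSpace (X k)]
    [∀ k, CompactSpace (X k)] (T : ∀ k, X k → X (k + 1)) (hT : ∀ k, Continuous (T k))
    (f : ∀ k, X k → ℝ) (hf : ∀ k, Continuous (f k)) (hfe : NDS.EquicontPotential f)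
    (Z : Set (X 0)) :
    Filter.Tendsto (fun 𝒰 : {𝒰 : NDS.CoverSeq X // NDS.HasLebesgueNumber 𝒰} =>
        NDS.PBPP T f Z 𝒰.1)
      (Filter.comap (fun 𝒰 : {𝒰 : NDS.CoverSeq X // NDS.HasLebesgueNumber 𝒰} =>
        NDS.coverDiam 𝒰.1) (nhds 0)) (nhds (NDS.PB T f Z)) :=
  bowen_pressure_via_open_covers_general T f hfe Z
end
end

section
/- Let (X,T) be an NDS, Z ⊂ X_0, and let f be a potential. Then each of the four pressures Q_low, Q_up, P_low, P_up is stable under closure: P(T,f,cl(Z)) = P(T,f,Z) for every P ∈ {Q_low, Q_up, P_low, P_up}, where cl(Z) is the closure of Z in X_0. -/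
open Filter Set
open scoped ENNReal NNReal

noncomputable section

/-!
Closed Bowen balls are closed because the orbit maps are continuous, so a finite union of them
that covers `Z` also covers `cl Z`: the quantities `Q_n` do not change. A finite
`(n,ε)`-separated subset `E` of `cl Z` is the limit of finite subsets of `Z`; once each point
has moved by less than `δ` in `d_n^T`, the moved set is still `(n, ε - 2δ)`-separated, and by
continuity of `S_n^T f` its partition sum tends to that of `E`. Hence
`P_n(T,f,cl Z,ε) ≤ P_n(T,f,Z,ε')` for all `ε' < ε`, and the shift from `ε` to `ε'` disappears
in the limit `ε → 0`.
-/

open Topology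

namespace NDS

variable {X : ℕ → Type*} [∀ k, MetricSpace (X k)] {T : ∀ k, X k → X (k + 1)}

section BowenDist

variable (T)

lemma bowenDist_self (n : ℕ) (x : X 0) : bowenDist T n x x = 0 := by
  simp [bowenDist]

lemma bowenDist_comm (n : ℕ) (x y : X 0) : bowenDist T n x y = bowenDist T n y x := by
  simp [bowenDist, nndist_comm]

lemma bowenDist_triangle (n : ℕ) (x y z : X 0) :
    bowenDist T n x z ≤ bowenDist T n x y + bowenDist T n y z := by
  unfold bowenDist
  exact_mod_cast Finset.sup_le fun j hj =>
    (nndist_triangle _ (iter T j y) _).trans <|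
      add_le_add (Finset.le_sup (f := fun j => nndist (iter T j x) (iter T j y)) hj)
        (Finset.le_sup (f := fun j => nndist (iter T j y) (iter T j z)) hj)

end BowenDist

lemma continuous_iter (hT : ∀ k, Continuous (T k)) : ∀ j, Continuous (iter T j)
  | 0 => continuous_id
  | j + 1 => (hT j).comp (continuous_iter hT j)

lemma continuous_bowenDist (hT : ∀ k, Continuous (T k)) (n : ℕ) :
    Continuous fun p : X 0 × X 0 => bowenDist T n p.1 p.2 :=
  NNReal.continuous_coe.comp <| Continuous.finset_sup_apply fun j _ =>
    ((continuous_iter hT j).comp continuous_fst).nndist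
      ((continuous_iter hT j).comp continuous_snd)

lemma isClosed_bowenClosedBall (hT : ∀ k, Continuous (T k)) (n : ℕ) (x : X 0) (ε : ℝ) :
    IsClosed (bowenClosedBall T n x ε) :=
  isClosed_le ((continuous_bowenDist hT n).comp (Continuous.prodMk_right x)) continuous_const

lemma continuous_birk (hT : ∀ k, Continuous (T k)) {f : ∀ k, X k → ℝ}
    (hf : ∀ k, Continuous (f k)) (n : ℕ) : Continuous (birk T f n) :=
  continuous_finsetSum _ fun j _ => (hf j).comp (continuous_iter hT j)

lemma IsSpanning.closure (hT : ∀ k, Continuous (T k)) {n : ℕ} {ε : ℝ} {Z : Set (X 0)}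
    {F : Finset (X 0)} (hF : IsSpanning T n ε Z F) :
    IsSpanning T n ε (_root_.closure Z) F := by
  have hcover : _root_.closure Z ⊆ ⋃ y ∈ F, bowenClosedBall T n y ε := by
    refine closure_minimal (fun x hx => ?_) <|
      F.finite_toSet.isClosed_biUnion fun y _ => isClosed_bowenClosedBall hT n y ε
    obtain ⟨y, hy, hxy⟩ := hF x hx
    exact mem_biUnion hy (by rwa [bowenClosedBall, mem_ofPred_eq, bowenDist_comm])
  intro x hx
  obtain ⟨y, hy, hxy⟩ := mem_iUnion₂.1 (hcover hx)
  exact ⟨y, hy, by rwa [bowenDist_comm]⟩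

lemma Qn_closure (hT : ∀ k, Continuous (T k)) (f : ∀ k, X k → ℝ) (Z : Set (X 0)) (n : ℕ)
    (ε : ℝ) : Qn T f (closure Z) n ε = Qn T f Z n ε :=
  le_antisymm (le_iInf₂ fun F hF => iInf₂_le F (hF.closure hT))
    (le_iInf₂ fun F hF => iInf₂_le F fun x hx => hF x (subset_closure hx))

lemma Pn_mono (f : ∀ k, X k → ℝ) (n : ℕ) (ε : ℝ) {Z W : Set (X 0)} (h : Z ⊆ W) :
    Pn T f Z n ε ≤ Pn T f W n ε :=
  iSup₂_le fun E hE =>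
    le_iSup₂ (f := fun E (_ : IsSeparated T n ε W E) => partSum T f n E) E ⟨hE.1.trans h, hE.2⟩

lemma IsSeparated.injOn_and_image_of_bowenDist_lt [DecidableEq (X 0)] {n : ℕ} {ε ε' δ : ℝ}
    {W Z : Set (X 0)} {E : Finset (X 0)} {g : X 0 → X 0} (hE : IsSeparated T n ε W E)
    (hgZ : ∀ x ∈ E, g x ∈ Z) (hg : ∀ x ∈ E, bowenDist T n x (g x) < δ) (hε' : 0 ≤ ε')
    (hδ : ε' + 2 * δ ≤ ε) :
    Set.InjOn g E ∧ IsSeparated T n ε' Z (E.image g) := by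
  have hsep : ∀ x ∈ E, ∀ y ∈ E, x ≠ y → ε' < bowenDist T n (g x) (g y) := by
    intro x hx y hy hxy
    have := hE.2 x hx y hy hxy
    have := bowenDist_triangle T n x (g x) y
    have := bowenDist_triangle T n (g x) (g y) y
    have := bowenDist_comm T n y (g y)
    linarith [hg x hx, hg y hy]
  have hinj : Set.InjOn g E := fun x hx y hy hxy => by
    by_contra hne
    have := hsep x hx y hy hne
    rw [hxy, bowenDist_self] at this
    linarith
  refine ⟨hinj, ?_, ?_⟩
  · simpa [Set.subset_def] using hgZ
  · simp only [Finset.mem_image]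
    rintro _ ⟨x, hx, rfl⟩ _ ⟨y, hy, rfl⟩ hne
    exact hsep x hx y hy fun h => hne (h ▸ rfl)

lemma sum_le_Pn_of_bowenDist_lt (f : ∀ k, X k → ℝ) {n : ℕ} {ε ε' δ : ℝ} {W Z : Set (X 0)}
    {E : Finset (X 0)} {g : X 0 → X 0} (hE : IsSeparated T n ε W E) (hgZ : ∀ x ∈ E, g x ∈ Z)
    (hg : ∀ x ∈ E, bowenDist T n x (g x) < δ) (hε' : 0 ≤ ε') (hδ : ε' + 2 * δ ≤ ε) :
    ∑ x ∈ E, ENNReal.ofReal (Real.exp (birk T f n (g x))) ≤ Pn T f Z n ε' := by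
  classical
  obtain ⟨hinj, hsep⟩ := hE.injOn_and_image_of_bowenDist_lt hgZ hg hε' hδ
  calc ∑ x ∈ E, ENNReal.ofReal (Real.exp (birk T f n (g x))) = partSum T f n (E.image g) :=
        (Finset.sum_image (f := fun x => ENNReal.ofReal (Real.exp (birk T f n x))) hinj).symm
    _ ≤ Pn T f Z n ε' :=
        le_iSup₂ (f := fun E (_ : IsSeparated T n ε' Z E) => partSum T f n E) _ hsep

lemma Pn_closure_le (hT : ∀ k, Continuous (T k)) {f : ∀ k, X k → ℝ}
    (hf : ∀ k, Continuous (f k)) (Z : Set (X 0)) (n : ℕ) {ε ε' : ℝ} (hε' : 0 ≤ ε')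
    (h : ε' < ε) : Pn T f (closure Z) n ε ≤ Pn T f Z n ε' := by
  refine iSup₂_le fun E hE => ?_
  choose! u huZ hu using fun x (hx : x ∈ closure Z) => mem_closure_iff_seq_limit.1 hx
  have hweight : Continuous fun x => ENNReal.ofReal (Real.exp (birk T f n x)) :=
    ENNReal.continuous_ofReal.comp (Real.continuous_exp.comp (continuous_birk hT hf n))
  have hlim : Tendsto (fun k => ∑ x ∈ E, ENNReal.ofReal (Real.exp (birk T f n (u x k))))
      atTop (𝓝 (partSum T f n E)) :=
    tendsto_finsetSum _ fun x hx => (hweight.tendsto x).comp (hu x (hE.1 hx))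
  have hclose : ∀ᶠ k in atTop, ∀ x ∈ E, bowenDist T n x (u x k) < (ε - ε') / 2 := by
    refine (eventually_all_finset E).2 fun x hx => ?_
    have := ((continuous_bowenDist hT n).tendsto (x, x)).comp
      (tendsto_const_nhds.prodMk_nhds (hu x (hE.1 hx)))
    rw [bowenDist_self] at this
    exact this.eventually (gt_mem_nhds (by linarith))
  exact le_of_tendsto hlim <| hclose.mono fun k hk =>
    sum_le_Pn_of_bowenDist_lt f hE (fun x hx => huZ x (hE.1 hx) k) hk hε' (by linarith)

lemma monotone_lowRate : Monotone lowRate := fun _ _ h =>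
  liminf_le_liminf <| Eventually.of_forall fun n =>
    mul_le_mul_of_nonneg_left (ENNReal.log_monotone (h n)) (EReal.coe_nonneg.2 (by positivity))

lemma monotone_upRate : Monotone upRate := fun _ _ h =>
  limsup_le_limsup <| Eventually.of_forall fun n =>
    mul_le_mul_of_nonneg_left (ENNReal.log_monotone (h n)) (EReal.coe_nonneg.2 (by positivity))

lemma iSup_rate_Pn_closure {R : (ℕ → ℝ≥0∞) → EReal} (hR : Monotone R)
    (hT : ∀ k, Continuous (T k)) {f : ∀ k, X k → ℝ} (hf : ∀ k, Continuous (f k))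
    (Z : Set (X 0)) :
    ⨆ (ε : ℝ) (_ : 0 < ε), R (fun n => Pn T f (closure Z) n ε) =
      ⨆ (ε : ℝ) (_ : 0 < ε), R (fun n => Pn T f Z n ε) := by
  refine le_antisymm (iSup₂_le fun ε hε => ?_)
    (iSup₂_mono fun ε _ => hR fun n => Pn_mono f n ε subset_closure)
  exact (hR fun n => Pn_closure_le hT hf Z n (half_pos hε).le (half_lt_self hε)).trans
    (le_iSup₂_of_le (ε / 2) (half_pos hε) le_rfl)

end NDS

theorem pressure_closure_stability_general {X : ℕ → Type*} [∀ k, MetricSpace (X k)]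
    (T : ∀ k, X k → X (k + 1)) (hT : ∀ k, Continuous (T k))
    (f : ∀ k, X k → ℝ) (hf : ∀ k, Continuous (f k)) (Z : Set (X 0)) :
    NDS.Qlow T f (closure Z) = NDS.Qlow T f Z ∧
    NDS.Qup T f (closure Z) = NDS.Qup T f Z ∧
    NDS.Plow T f (closure Z) = NDS.Plow T f Z ∧
    NDS.Pup T f (closure Z) = NDS.Pup T f Z :=
  ⟨by simp only [NDS.Qlow, NDS.Qn_closure hT], by simp only [NDS.Qup, NDS.Qn_closure hT],
    NDS.iSup_rate_Pn_closure NDS.monotone_lowRate hT hf Z,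
    NDS.iSup_rate_Pn_closure NDS.monotone_upRate hT hf Z⟩

/-- The lower/upper spanning and separated pressures are stable under
taking the closure of the subset. -/
theorem pressure_closure_stability {X : ℕ → Type*} [∀ k, MetricSpace (X k)]
    [∀ k, CompactSpace (X k)] (T : ∀ k, X k → X (k + 1)) (hT : ∀ k, Continuous (T k))
    (f : ∀ k, X k → ℝ) (hf : ∀ k, Continuous (f k)) (Z : Set (X 0)) :
    NDS.Qlow T f (closure Z) = NDS.Qlow T f Z ∧
    NDS.Qup T f (closure Z) = NDS.Qup T f Z ∧
    NDS.Plow T f (closure Z) = NDS.Plow T f Z ∧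
    NDS.Pup T f (closure Z) = NDS.Pup T f Z :=
  pressure_closure_stability_general T hT f hf Z
end
end
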